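/- arXiv:1903.04574 — 7 statements merged into one kernel-verified Lean document; each statement's English description precedes it below -/
import Mathlib

section
/- For n symmetric firms with linear cost c < α in a single Cournot market with inverse demand p(d) = α - βd, the efficient social welfare is (α - c)²/(2β), and the price of anarchy (ratio of efficient social welfare to Nash equilibrium social welfare) equals 1 + 1/((n+1)² - 1). -/
/-!
Welfare depends on a quantity profile only through the aggregate output `S`, as the concave
quadratic `(α - c) S - β S² / 2`, maximised at `S = (α - c) / β` with value `(α - c)² / (2β)`.
The Nash aggregate `n (α - c) / (β (n + 1))` attains the fraction `n (n + 2) / (n + 1)²` of it,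
and `(n + 1)² / (n (n + 2)) = 1 + 1 / ((n + 1)² - 1)`.
-/

open Finset

namespace Cournot

noncomputable def aggregateWelfare (α β c S : ℝ) : ℝ := (α - c) * S - β * S ^ 2 / 2

theorem welfare_eq_aggregateWelfare {n : ℕ} (α β c : ℝ) (q : Fin n → ℝ) :
    α * (∑ j, q j) - β * (∑ j, q j) ^ 2 / 2 - ∑ i, c * q i = aggregateWelfare α β c (∑ j, q j) := by
  rw [aggregateWelfare, ← mul_sum]
  ring

theorem aggregateWelfare_le {β : ℝ} (hβ : 0 < β) (α c S : ℝ) :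
    aggregateWelfare α β c S ≤ (α - c) ^ 2 / (2 * β) := by
  rw [aggregateWelfare, le_div_iff₀ (by positivity)]
  nlinarith [sq_nonneg (β * S - (α - c))]

theorem aggregateWelfare_optimal {β : ℝ} (hβ : β ≠ 0) (α c : ℝ) :
    aggregateWelfare α β c ((α - c) / β) = (α - c) ^ 2 / (2 * β) := by
  rw [aggregateWelfare]
  field_simp
  ring

theorem aggregateWelfare_nash {β x : ℝ} (hβ : β ≠ 0) (hx : x + 1 ≠ 0) (α c : ℝ) :
    aggregateWelfare α β c (x * ((α - c) / (β * (x + 1)))) =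
      (α - c) ^ 2 / (2 * β) * (x * (x + 2) / (x + 1) ^ 2) := by
  rw [aggregateWelfare]
  field_simp
  ring

theorem inv_nash_fraction {x : ℝ} (hx : 0 < x) :
    (x * (x + 2) / (x + 1) ^ 2)⁻¹ = 1 + 1 / ((x + 1) ^ 2 - 1) := by
  have hx2 : (x + 1) ^ 2 - 1 = x * (x + 2) := by ring
  rw [hx2, inv_div]
  field_simp
  ring

end Cournot

open Cournot in
theorem stmt1_general (n : ℕ) (hn : 1 ≤ n) (α β c : ℝ) (hcα : c < α) (hβ : 0 < β)
    (SW : (Fin n → ℝ) → ℝ)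
    (hSW : ∀ q, SW q = α * (∑ j, q j) - β * (∑ j, q j) ^ 2 / 2 - ∑ i, c * q i)
    (qNE : Fin n → ℝ) (hq : ∀ i, qNE i = (α - c) / (β * ((n : ℝ) + 1))) :
    IsGreatest {w : ℝ | ∃ q : Fin n → ℝ, (∀ i, 0 ≤ q i) ∧ w = SW q}
      ((α - c) ^ 2 / (2 * β)) ∧
    (α - c) ^ 2 / (2 * β) / SW qNE = 1 + 1 / (((n : ℝ) + 1) ^ 2 - 1) := by
  have hn' : (0 : ℝ) < n := by exact_mod_cast hn
  have hA : 0 < α - c := sub_pos.2 hcα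
  have hSW' : ∀ q, SW q = aggregateWelfare α β c (∑ j, q j) := fun q =>
    (hSW q).trans (welfare_eq_aggregateWelfare α β c q)
  refine ⟨⟨⟨fun _ => (α - c) / β / n, fun _ => by positivity, ?_⟩, ?_⟩, ?_⟩
  · rw [hSW', sum_const, card_univ, Fintype.card_fin, nsmul_eq_mul,
      mul_div_cancel₀ _ hn'.ne', aggregateWelfare_optimal hβ.ne']
  · rintro w ⟨q, -, rfl⟩
    exact (hSW' q).trans_le (aggregateWelfare_le hβ α c _)
  · rw [hSW', sum_congr rfl fun i _ => hq i, sum_const, card_univ, Fintype.card_fin,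
      nsmul_eq_mul, aggregateWelfare_nash hβ.ne' (by positivity), div_mul_cancel_left₀
      (by positivity), inv_nash_fraction hn']

/-- Symmetric linear-cost single-market Cournot: the efficient social welfare is
`(α - c)²/(2β)` and the price of anarchy equals `1 + 1/((n+1)² - 1)`. -/
theorem stmt1 (n : ℕ) (hn : 1 ≤ n) (α β c : ℝ) (hc : 0 ≤ c) (hcα : c < α) (hβ : 0 < β)
    (SW : (Fin n → ℝ) → ℝ)
    (hSW : ∀ q, SW q = α * (∑ j, q j) - β * (∑ j, q j) ^ 2 / 2 - ∑ i, c * q i)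
    (qNE : Fin n → ℝ) (hq : ∀ i, qNE i = (α - c) / (β * ((n : ℝ) + 1))) :
    IsGreatest {w : ℝ | ∃ q : Fin n → ℝ, (∀ i, 0 ≤ q i) ∧ w = SW q}
      ((α - c) ^ 2 / (2 * β)) ∧
    (α - c) ^ 2 / (2 * β) / SW qNE = 1 + 1 / (((n : ℝ) + 1) ^ 2 - 1) :=
  stmt1_general n hn α β c hcα hβ SW hSW qNE hq
end

section
/- In a single Cournot market with n firms having linear costs c₁ ≤ ⋯ ≤ c_k < α (and only firms 1,…,k participating, all producing a strictly positive amount at equilibrium), the aggregate Nash equilibrium demand is d = (Σ_{i=1}^k (α - c_i))/((k+1)β), and the socially efficient demand is d* = (α - c₁)/β; consequently, when the equilibrium participation condition holds, d/d* = Σ_{i=1}^k (α-c_i)/((k+1)(α-c₁)) ≥ 1/2, i.e. d ≥ d*/2. -/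
/-- At an interior Nash equilibrium of the single-market Cournot game with linear costs,
aggregate demand is `Σ(α-cᵢ)/((k+1)β)` and is at least half of the efficient demand
`(α-c₁)/β`. -/
theorem stmt6 (k : ℕ) (hk : 1 ≤ k) (α β : ℝ) (hβ : 0 < β) (c : ℕ → ℝ)
    (hmono : ∀ i j, i ≤ j → j < k → c i ≤ c j)
    (hck : c (k - 1) < α)
    (q : ℕ → ℝ)
    (hpos : ∀ i < k, 0 < q i)
    (hfoc : ∀ i < k, α - β * (∑ j ∈ Finset.range k, q j) - β * q i = c i) :
    (∑ j ∈ Finset.range k, q j) =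
      (∑ i ∈ Finset.range k, (α - c i)) / (((k : ℝ) + 1) * β) ∧
    (∑ i ∈ Finset.range k, (α - c i)) / (((k : ℝ) + 1) * (α - c 0)) ≥ 1 / 2 := by
  set S := ∑ j ∈ Finset.range k, q j with hS
  have hSpos : 0 < S := Finset.sum_pos (fun i hi => hpos i (Finset.mem_range.mp hi))
    (by simp [Finset.nonempty_range_iff]; omega)
  have hq0pos : 0 < q 0 := hpos 0 (by omega)
  have hq0 : q 0 ≤ S := Finset.single_le_sum (f := q)
    (fun i hi => (hpos i (Finset.mem_range.mp hi)).le) (Finset.mem_range.mpr (by omega))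
  have hsum : ∑ i ∈ Finset.range k, (α - c i) = ((k : ℝ) + 1) * β * S := by
    have h : ∀ i ∈ Finset.range k, α - c i = β * S + β * q i := by
      intro i hi
      have := hfoc i (Finset.mem_range.mp hi); linarith
    rw [Finset.sum_congr rfl h, Finset.sum_add_distrib, Finset.sum_const, ← Finset.mul_sum,
      Finset.card_range, ← hS]
    push_cast; ring
  have hc0 : α - c 0 = β * S + β * q 0 := by
    have := hfoc 0 (by omega); linarith
  have hk1 : (0:ℝ) < (k : ℝ) + 1 := by positivity
  constructor
  · rw [hsum]; field_simp
  · rw [hsum, hc0, ge_iff_le, le_div_iff₀ (by positivity)]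
    nlinarith [mul_pos hk1 (mul_pos hβ hSpos)]
end

section
/- Consider the single-market Cournot game with edge set E_k giving access to firms 1,…,k with linear costs c₁ ≤ ⋯ ≤ c_n ≤ α. The production quantity of firm k at the unique Nash equilibrium is strictly positive if and only if α - c_k > (1/k)·Σ_{i=1}^{k-1}(α - c_i). -/
/-!
At an equilibrium with total output `S` and price `p = α - β S`, every firm has `β q_i ≥ p - c_i`,
with equality when `q_i > 0`. If firm `j` is active, summing these bounds over the other firms and
substituting `β S = α - c_j - β q_j` gives `Σ_{i ≠ j} (α - c_i) < #s (α - c_j)`. If it is inactive,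
then `p ≤ c_j`, so every other firm has `β q_i ≤ c_j - c_i` (this is where `c_i ≤ c_j` enters);
summing and using `α - c_j ≤ β S` gives the reverse inequality.
-/

open Finset

variable {ι : Type*}

def IsCournotEquilibrium (s : Finset ι) (α β : ℝ) (c q : ι → ℝ) : Prop :=
  ∀ i ∈ s, 0 ≤ q i ∧ (0 < q i → α - β * ∑ j ∈ s, q j - β * q i = c i) ∧
    (q i = 0 → α - β * ∑ j ∈ s, q j ≤ c i)

namespace IsCournotEquilibrium

variable {s : Finset ι} {α β : ℝ} {c q : ι → ℝ} {i j : ι}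

theorem sub_sub_le_mul (h : IsCournotEquilibrium s α β c q) (hi : i ∈ s) :
    α - c i - β * ∑ l ∈ s, q l ≤ β * q i := by
  obtain ⟨hnn, hfoc, hslack⟩ := h i hi
  rcases hnn.lt_or_eq with hpos | hzero
  · linarith [hfoc hpos]
  · rw [← hzero, mul_zero]
    linarith [hslack hzero.symm]

theorem mul_le_sub (h : IsCournotEquilibrium s α β c q) (hi : i ∈ s) {c' : ℝ}
    (hc : c i ≤ c') (hprice : α - β * ∑ l ∈ s, q l ≤ c') :
    β * q i ≤ c' - c i := by
  obtain ⟨hnn, hfoc, -⟩ := h i hi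
  rcases hnn.lt_or_eq with hpos | hzero
  · linarith [hfoc hpos]
  · rw [← hzero, mul_zero]
    linarith

theorem sum_erase_lt_of_pos [DecidableEq ι] (h : IsCournotEquilibrium s α β c q) (hβ : 0 < β)
    (hj : j ∈ s) (hq : 0 < q j) :
    ∑ i ∈ s.erase j, (α - c i) < #s * (α - c j) := by
  set S := ∑ l ∈ s, q l
  have hprice : β * S = α - c j - β * q j := by linarith [(h j hj).2.1 hq]
  have hothers : ∑ i ∈ s.erase j, (α - c i - β * S) ≤ ∑ i ∈ s.erase j, β * q i :=
    sum_le_sum fun i hi => h.sub_sub_le_mul (mem_of_mem_erase hi)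
  have htotal : β * q j + ∑ i ∈ s.erase j, β * q i = β * S := by
    rw [add_sum_erase s (fun i => β * q i) hj, mul_sum]
  rw [← card_erase_add_one hj, Nat.cast_add_one]
  simp only [sum_sub_distrib, sum_const, nsmul_eq_mul, hprice] at hothers ⊢
  have hqj : 0 < β * q j := mul_pos hβ hq
  have : 0 ≤ (#(s.erase j) : ℝ) * (β * q j) := by positivity
  linarith

theorem card_mul_le_sum_erase_of_eq_zero [DecidableEq ι] (h : IsCournotEquilibrium s α β c q)
    (hc : ∀ i ∈ s, c i ≤ c j) (hj : j ∈ s) (hq : q j = 0) :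
    #s * (α - c j) ≤ ∑ i ∈ s.erase j, (α - c i) := by
  set S := ∑ l ∈ s, q l
  have hprice : α - β * S ≤ c j := (h j hj).2.2 hq
  have hothers : ∑ i ∈ s.erase j, β * q i ≤ ∑ i ∈ s.erase j, (c j - c i) :=
    sum_le_sum fun i hi => h.mul_le_sub (mem_of_mem_erase hi) (hc i (mem_of_mem_erase hi)) hprice
  have htotal : β * q j + ∑ i ∈ s.erase j, β * q i = β * S := by
    rw [add_sum_erase s (fun i => β * q i) hj, mul_sum]
  rw [hq, mul_zero, zero_add] at htotal
  rw [← card_erase_add_one hj, Nat.cast_add_one]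
  simp only [sum_sub_distrib, sum_const, nsmul_eq_mul] at hothers ⊢
  linarith

theorem pos_iff_sum_erase_lt [DecidableEq ι] (h : IsCournotEquilibrium s α β c q) (hβ : 0 < β)
    (hc : ∀ i ∈ s, c i ≤ c j) (hj : j ∈ s) :
    0 < q j ↔ ∑ i ∈ s.erase j, (α - c i) < #s * (α - c j) := by
  refine ⟨h.sum_erase_lt_of_pos hβ hj, fun hlt => ?_⟩
  by_contra hq
  have hzero : q j = 0 := le_antisymm (not_lt.mp hq) (h j hj).1
  exact (h.card_mul_le_sum_erase_of_eq_zero hc hj hzero).not_gt hlt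

end IsCournotEquilibrium

theorem stmt7_general (k : ℕ) (hk : 1 ≤ k) (α β : ℝ) (hβ : 0 < β) (c : ℕ → ℝ)
    (hmono : ∀ i j, i ≤ j → j < k → c i ≤ c j)
    (q : ℕ → ℝ)
    (hnn : ∀ i < k, 0 ≤ q i)
    (hfoc : ∀ i < k, 0 < q i →
      α - β * (∑ j ∈ Finset.range k, q j) - β * q i = c i)
    (hslack : ∀ i < k, q i = 0 →
      α - β * (∑ j ∈ Finset.range k, q j) ≤ c i) :
    0 < q (k - 1) ↔
      α - c (k - 1) > (1 / (k : ℝ)) * ∑ i ∈ Finset.range (k - 1), (α - c i) := by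
  have heq : IsCournotEquilibrium (range k) α β c q := fun i hi =>
    ⟨hnn i (mem_range.mp hi), hfoc i (mem_range.mp hi), hslack i (mem_range.mp hi)⟩
  have hlast : k - 1 ∈ range k := mem_range.mpr (by omega)
  have herase : (range k).erase (k - 1) = range (k - 1) := by
    obtain ⟨m, rfl⟩ : ∃ m, k = m + 1 := ⟨k - 1, by omega⟩
    simp [range_add_one]
  have hcheapest : ∀ i ∈ range k, c i ≤ c (k - 1) := fun i hi =>
    hmono i _ (Nat.le_sub_one_of_lt (mem_range.mp hi)) (by omega)
  have hkpos : (0 : ℝ) < k := by exact_mod_cast hk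
  rw [heq.pos_iff_sum_erase_lt hβ hcheapest hlast, herase, card_range, gt_iff_lt, one_div,
    inv_mul_lt_iff₀ hkpos]

/-- Participation criterion: firm `k` produces a strictly positive quantity at the Nash
equilibrium iff `α - c_k > (1/k)·Σ_{i<k}(α - c_i)`. -/
theorem stmt7 (k : ℕ) (hk : 1 ≤ k) (α β : ℝ) (hβ : 0 < β) (c : ℕ → ℝ)
    (hmono : ∀ i j, i ≤ j → j < k → c i ≤ c j)
    (hcα : ∀ i < k, c i ≤ α)
    (q : ℕ → ℝ)
    (hnn : ∀ i < k, 0 ≤ q i)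
    (hfoc : ∀ i < k, 0 < q i →
      α - β * (∑ j ∈ Finset.range k, q j) - β * q i = c i)
    (hslack : ∀ i < k, q i = 0 →
      α - β * (∑ j ∈ Finset.range k, q j) ≤ c i) :
    0 < q (k - 1) ↔
      α - c (k - 1) > (1 / (k : ℝ)) * ∑ i ∈ Finset.range (k - 1), (α - c i) :=
  stmt7_general k hk α β hβ c hmono q hnn hfoc hslack
end

section
/- Assume all k firms produce strictly positive quantities at the Nash equilibrium of the single-market Cournot game with linear costs c₁ ≤ ⋯ ≤ c_k < α and inverse demand p(d) = α - βd. Then the equilibrium social welfare equals (Σ_{i=1}^k (α - c_i)²)/β - ((2k+3)/2)·(Σ_{i=1}^k (α - c_i))²/((k+1)²β). -/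
/-- Closed form for the interior Nash equilibrium social welfare of the single-market
Cournot game with linear costs. -/
theorem stmt8 (k : ℕ) (hk : 1 ≤ k) (α β : ℝ) (hβ : 0 < β) (c : ℕ → ℝ)
    (q : ℕ → ℝ)
    (hq : ∀ i < k, q i =
      (((k : ℝ) + 1) * (α - c i) - ∑ l ∈ Finset.range k, (α - c l)) / (((k : ℝ) + 1) * β))
    (hpos : ∀ i < k, 0 < q i)
    (d : ℝ) (hd : d = ∑ i ∈ Finset.range k, q i)
    (SW : ℝ) (hSW : SW = α * d - β / 2 * d ^ 2 - ∑ i ∈ Finset.range k, c i * q i) :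
    SW = (∑ i ∈ Finset.range k, (α - c i) ^ 2) / β -
      (2 * (k : ℝ) + 3) / 2 * (∑ i ∈ Finset.range k, (α - c i)) ^ 2 /
        (((k : ℝ) + 1) ^ 2 * β) := by
  have hβ' : (β : ℝ) ≠ 0 := ne_of_gt hβ
  have hk1 : ((k : ℝ) + 1) ≠ 0 := by positivity
  set Sc : ℝ := ∑ i ∈ Finset.range k, c i with hSc
  set Sc2 : ℝ := ∑ i ∈ Finset.range k, (c i) ^ 2 with hSc2
  have hT1 : ∑ i ∈ Finset.range k, (α - c i) = k * α - Sc := by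
    simp [Finset.sum_sub_distrib, Finset.sum_const, Finset.card_range, mul_comm]
    exact hSc.symm
  have hT2 : ∑ i ∈ Finset.range k, (α - c i) ^ 2
      = k * α ^ 2 - 2 * α * Sc + Sc2 := by
    have : ∀ i ∈ Finset.range k, (α - c i) ^ 2
        = α ^ 2 - 2 * α * c i + (c i) ^ 2 := by intro i _; ring
    rw [Finset.sum_congr rfl this]
    simp [Finset.sum_add_distrib, Finset.sum_sub_distrib, Finset.sum_const,
      Finset.card_range, ← Finset.mul_sum, mul_comm]
    rw [← Finset.sum_mul]
  have h1 : ∑ i ∈ Finset.range k, q i = (k * α - Sc) / (((k : ℝ) + 1) * β) := by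
    rw [Finset.sum_congr rfl (fun i hi => hq i (Finset.mem_range.mp hi)), hT1]
    rw [← Finset.sum_div]
    congr 1
    simp [Finset.sum_sub_distrib, ← Finset.mul_sum, Finset.sum_const, Finset.card_range, hT1]
    ring
  have h2 : ∑ i ∈ Finset.range k, c i * q i
      = (((k : ℝ) + 1) * (α * Sc - Sc2) - (k * α - Sc) * Sc) / (((k : ℝ) + 1) * β) := by
    have : ∀ i ∈ Finset.range k, c i * q i
        = (((k : ℝ) + 1) * (α * c i - (c i) ^ 2) - (k * α - Sc) * c i)
          / (((k : ℝ) + 1) * β) := by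
      intro i hi
      rw [hq i (Finset.mem_range.mp hi), hT1]
      field_simp
    rw [Finset.sum_congr rfl this, ← Finset.sum_div]
    congr 1
    simp [Finset.sum_sub_distrib, ← Finset.mul_sum, Finset.sum_add_distrib, mul_sub]
    rw [← hSc, ← hSc2]
  rw [hSW, hd, h1, h2, hT1, hT2]
  field_simp
  ring
end

section
/- Let SW_k denote the Nash equilibrium social welfare of the single-market Cournot game with firms 1,…,k having linear costs c₁ ≤ ⋯ ≤ c_k ≤ α, assuming firm k is active (q_k > 0) at the equilibrium with edge set E_k. Then SW_k > SW_{k-1} if and only if α - c_k > (1/k)·(1 + 1/(k - 1/(2(k+1))))·Σ_{i=1}^{k-1}(α - c_i). -/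
/-- Welfare comparison for the greedy algorithm: `SW_k > SW_{k-1}` iff
`α - c_k > (1/k)(1 + 1/(k - 1/(2(k+1))))·Σ_{i<k}(α - c_i)`. -/
theorem stmt9 (k : ℕ) (hk : 1 ≤ k) (α β : ℝ) (hβ : 0 < β) (c : ℕ → ℝ)
    (hmono : ∀ i j, i ≤ j → j < k → c i ≤ c j)
    (hcα : ∀ i < k, c i ≤ α)
    (hactive : α - c (k - 1) > (1 / (k : ℝ)) * ∑ i ∈ Finset.range (k - 1), (α - c i))
    (SW : ℕ → ℝ)
    (hSW : ∀ j : ℕ, SW j = (∑ i ∈ Finset.range j, (α - c i) ^ 2) / β -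
      (2 * (j : ℝ) + 3) / 2 * (∑ i ∈ Finset.range j, (α - c i)) ^ 2 /
        (((j : ℝ) + 1) ^ 2 * β)) :
    SW k > SW (k - 1) ↔
      α - c (k - 1) > (1 / (k : ℝ)) * (1 + 1 / ((k : ℝ) - 1 / (2 * ((k : ℝ) + 1)))) *
        ∑ i ∈ Finset.range (k - 1), (α - c i) := by
  obtain ⟨n, rfl⟩ : ∃ n, k = n + 1 := ⟨k - 1, (Nat.succ_pred_eq_of_pos hk).symm⟩
  simp only [Nat.add_sub_cancel] at *
  push_cast at hactive ⊢
  rw [hSW, hSW, Finset.sum_range_succ, Finset.sum_range_succ]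
  set S : ℝ := ∑ i ∈ Finset.range n, (α - c i) with hSdef
  set Q : ℝ := ∑ i ∈ Finset.range n, (α - c i) ^ 2 with hQdef
  set x : ℝ := α - c n with hxdef
  set K : ℝ := (n : ℝ) + 1 with hKdef
  have hK1 : (1 : ℝ) ≤ K := by
    have h0 : (0:ℝ) ≤ n := Nat.cast_nonneg n
    rw [hKdef]; linarith
  have hK0 : (0 : ℝ) < K := by linarith
  have hD : (0 : ℝ) < 2*K^2 + 2*K - 1 := by nlinarith
  have hx : S < K * x := by
    have h := hactive
    calc S = K * (1/K * S) := by field_simp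
    _ < K * x := by exact (mul_lt_mul_iff_right₀ hK0).mpr h
  have hcast : ((n + 1 : ℕ) : ℝ) = K := by push_cast [hKdef]; ring
  rw [hcast]
  have hden : (0:ℝ) < 2 * K^2 * (K+1)^2 * β := by positivity
  have hfac : (Q + x^2)/β - (2*K+3)/2 * (S+x)^2 / ((K+1)^2*β)
      - ((Q)/β - (2*(n:ℝ)+3)/2 * S^2 / (((n:ℝ)+1)^2*β))
      = (K*x - S) * ((K*(2*K^2+2*K-1))*x - (2*K^2+4*K+1)*S) / (2*K^2*(K+1)^2*β) := by
    have hn1 : ((n:ℝ)+1) = K := hKdef.symm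
    rw [hn1]
    field_simp
    ring
  have h2 : (2*K^2+2*K-1 : ℝ) ≠ 0 := ne_of_gt hD
  have h3 : K ≠ 0 := ne_of_gt hK0
  have h4 : (K+1 : ℝ) ≠ 0 := by linarith
  have hrhs : 1 / K * (1 + 1 / (K - 1 / (2 * (K + 1)))) * S
      = (2*K^2+4*K+1)*S / (K*(2*K^2+2*K-1)) := by
    have e1 : K - 1 / (2 * (K + 1)) = (2*K^2+2*K-1) / (2*(K+1)) := by
      field_simp
    rw [e1, one_div_div]
    field_simp
    have h2' : K * 2 * (K + 1) - 1 ≠ 0 := by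
      contrapose! h2; linear_combination h2
    rw [one_add_div h2', div_mul_eq_mul_div, div_eq_div_iff h2' h2']
    ring
  rw [gt_iff_lt, gt_iff_lt, ← sub_pos, hfac, hrhs,
    div_lt_iff₀ (by positivity : (0:ℝ) < K*(2*K^2+2*K-1)),
    lt_div_iff₀ hden, zero_mul]
  have h1 : (0:ℝ) < K * x - S := by linarith
  rw [mul_pos_iff_of_pos_left h1]
  constructor <;> intro h <;> nlinarith
end

section
/- Let k ≥ 1 and suppose 0 ≤ α - c_k ≤ α - c_{k-1} ≤ ⋯ ≤ α - c₁ with α - c_{k+1} ≤ α - c_k. If α - c_k ≤ (1/k)·(1 + 1/(k - 1/(2(k+1))))·Σ_{i=1}^{k-1}(α - c_i), then α - c_{k+1} ≤ (1/(k+1))·(1 + 1/(k+1 - 1/(2(k+2))))·Σ_{i=1}^{k}(α - c_i). -/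
/-!
Write `φ(K) = (1/K)(1 + 1/(K - 1/(2(K+1))))` for the threshold coefficient. Since the new
margin `α - c_{k+1}` is at most `x = α - c_k`, it suffices that `x ≤ φ(k) S` forces
`x ≤ φ(k+1) (S + x)`, where `S` is the sum of the first `k - 1` margins. In closed form
`φ(K) = (2K² + 4K + 1) / (K(2K² + 2K - 1))`, and after clearing denominators this becomes a
polynomial inequality in `K ≥ 1`, `S ≥ 0` and `x ≥ 0`.
-/

open Finset

noncomputable def stopCoeff (K : ℝ) : ℝ := 1 / K * (1 + 1 / (K - 1 / (2 * (K + 1))))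

lemma stopCoeff_eq {K : ℝ} (hK : 1 ≤ K) :
    stopCoeff K = (2 * K ^ 2 + 4 * K + 1) / (K * (2 * K ^ 2 + 2 * K - 1)) := by
  have hq : 2 * K ^ 2 + 2 * K - 1 ≠ 0 := by nlinarith
  have hinner : K - 1 / (2 * (K + 1)) = (2 * K ^ 2 + 2 * K - 1) / (2 * (K + 1)) := by
    field_simp
  rw [stopCoeff, hinner, one_div_div, one_add_div hq, one_div_mul_eq_div, div_div, mul_comm _ K]
  ring

lemma le_stopCoeff_succ_mul_add {K S x : ℝ} (hK : 1 ≤ K) (hS : 0 ≤ S) (hx : 0 ≤ x)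
    (h : x ≤ stopCoeff K * S) : x ≤ stopCoeff (K + 1) * (S + x) := by
  rw [stopCoeff_eq hK, div_mul_eq_mul_div] at h
  rw [stopCoeff_eq (by linarith), div_mul_eq_mul_div]
  have hq : 0 < 2 * K ^ 2 + 2 * K - 1 := by nlinarith
  have hq_succ : 0 < 2 * (K + 1) ^ 2 + 2 * (K + 1) - 1 := by nlinarith
  rw [le_div_iff₀ (by positivity)] at h
  rw [le_div_iff₀ (by positivity)]
  nlinarith [mul_nonneg hx hS, mul_nonneg (mul_nonneg hx hS) (by linarith : 0 ≤ K - 1)]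

/-- Induction step (Lemma: once the greedy stopping condition holds at `k`, it holds at
`k+1`), with firms indexed `1, …, k+1`. -/
theorem stmt10 (k : ℕ) (hk : 1 ≤ k) (α : ℝ) (c : ℕ → ℝ)
    (hmono : ∀ i, 1 ≤ i → i ≤ k → c i ≤ c (i + 1))
    (hnn : c k ≤ α)
    (hstop : α - c k ≤ (1 / (k : ℝ)) * (1 + 1 / ((k : ℝ) - 1 / (2 * ((k : ℝ) + 1)))) *
      ∑ i ∈ Finset.Icc 1 (k - 1), (α - c i)) :
    α - c (k + 1) ≤ (1 / ((k : ℝ) + 1)) *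
      (1 + 1 / (((k : ℝ) + 1) - 1 / (2 * ((k : ℝ) + 2)))) *
      ∑ i ∈ Finset.Icc 1 k, (α - c i) := by
  have hc : MonotoneOn c (Set.Icc 1 (k + 1)) :=
    monotoneOn_of_le_add_one Set.ordConnected_Icc fun i _ hi hi' ↦
      hmono i hi.1 (by simp only [Set.mem_Icc] at hi'; omega)
  have hS : 0 ≤ ∑ i ∈ Icc 1 (k - 1), (α - c i) := sum_nonneg fun i hi ↦ by
    rw [mem_Icc] at hi
    linarith [hc ⟨hi.1, by omega⟩ ⟨hk, by omega⟩ (by omega : i ≤ k)]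
  have hsplit : ∑ i ∈ Icc 1 k, (α - c i) = ∑ i ∈ Icc 1 (k - 1), (α - c i) + (α - c k) := by
    obtain ⟨m, rfl⟩ : ∃ m, k = m + 1 := ⟨k - 1, by omega⟩
    rw [sum_Icc_succ_top hk, Nat.add_sub_cancel]
  have hcoef : stopCoeff ((k : ℝ) + 1) =
      1 / ((k : ℝ) + 1) * (1 + 1 / (((k : ℝ) + 1) - 1 / (2 * ((k : ℝ) + 2)))) := by
    rw [stopCoeff]; ring
  have hstep : α - c (k + 1) ≤ α - c k := by
    linarith [hc ⟨hk, by omega⟩ ⟨by omega, le_rfl⟩ (Nat.le_succ k)]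
  rw [hsplit, ← hcoef]
  exact hstep.trans (le_stopCoeff_succ_mul_add (by exact_mod_cast hk) hS (by linarith) hstop)
end

section
/- In the open access Cournot game with n symmetric firms having cost c < α, market with p(d) = α - βd, and per-market search cost penalty θ·f(n)·CS with f(n) = (n-1)/(n+1) and CS the Nash consumer surplus, the price of anarchy is at most (n+1)²/(n²(1 - θ·f(n)) + 2n); in particular at θ = 1 this bound equals (n+1)²/((2n²/(n+1)) + 2n), which grows linearly in n. -/
/-- Open access with search costs: the price of anarchy is at most
`(n+1)²/(n²(1 - θ(n-1)/(n+1)) + 2n)`, and at `θ = 1` this bound equals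
`(n+1)²/(2n²/(n+1) + 2n)`, which grows at least linearly in `n`. -/
theorem stmt19 (n : ℕ) (hn : 1 ≤ n) (α β c θ : ℝ) (hβ : 0 < β) (hc : 0 ≤ c) (hcα : c < α)
    (hθ0 : 0 ≤ θ) (hθ1 : θ ≤ 1)
    (CS NashW EffW r : ℝ)
    (hCS : CS = (α - c) ^ 2 * (n : ℝ) ^ 2 / (2 * β * ((n : ℝ) + 1) ^ 2))
    (hNash : NashW = (α - c) ^ 2 / (2 * β) * (1 - 1 / ((n : ℝ) + 1) ^ 2))
    (hEff : EffW = (α - c) ^ 2 / (2 * β))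
    (hr : r = θ * (((n : ℝ) - 1) / ((n : ℝ) + 1)) * CS) :
    EffW / (NashW - r) ≤
      ((n : ℝ) + 1) ^ 2 /
        ((n : ℝ) ^ 2 * (1 - θ * (((n : ℝ) - 1) / ((n : ℝ) + 1))) + 2 * (n : ℝ)) ∧
    ((n : ℝ) + 1) ^ 2 /
        ((n : ℝ) ^ 2 * (1 - 1 * (((n : ℝ) - 1) / ((n : ℝ) + 1))) + 2 * (n : ℝ)) =
      ((n : ℝ) + 1) ^ 2 / (2 * (n : ℝ) ^ 2 / ((n : ℝ) + 1) + 2 * (n : ℝ)) ∧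
    (n : ℝ) / 4 ≤ ((n : ℝ) + 1) ^ 2 / (2 * (n : ℝ) ^ 2 / ((n : ℝ) + 1) + 2 * (n : ℝ)) := by
  have hx : (1:ℝ) ≤ (n:ℝ) := by exact_mod_cast hn
  set x := (n:ℝ) with hxdef
  have hx1 : (0:ℝ) < x + 1 := by linarith
  have hx0 : (0:ℝ) < x := by linarith
  have hac : (0:ℝ) < α - c := by linarith
  have hA : (0:ℝ) < (α - c)^2 := by positivity
  have hθf : θ * ((x - 1) / (x + 1)) ≤ (x - 1) / (x + 1) := by
    have h0 : 0 ≤ (x - 1) / (x + 1) := by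
      apply div_nonneg <;> linarith
    nlinarith
  have hfrac : (x - 1) / (x + 1) < 1 := by
    rw [div_lt_one hx1]; linarith
  have hD : (0:ℝ) < x ^ 2 * (1 - θ * ((x - 1) / (x + 1))) + 2 * x := by
    have : 0 < 1 - θ * ((x - 1) / (x + 1)) := by linarith
    nlinarith
  have hx1' : x + 1 ≠ 0 := hx1.ne'
  refine ⟨?_, ?_, ?_⟩
  · apply le_of_eq
    have h1 : NashW - r = (α - c)^2 / (2*β) *
        ((x ^ 2 * (1 - θ * ((x - 1) / (x + 1))) + 2 * x) / (x+1)^2) := by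
      rw [hNash, hr, hCS]
      field_simp
      ring
    have hb : (0:ℝ) < (α - c)^2 / (2*β) *
        ((x ^ 2 * (1 - θ * ((x - 1) / (x + 1))) + 2 * x) / (x+1)^2) :=
      mul_pos (by positivity) (div_pos hD (by positivity))
    rw [hEff, h1, div_eq_div_iff hb.ne' hD.ne']
    field_simp
  · congr 1
    field_simp
    ring
  · have hden : (0:ℝ) < 2 * x ^ 2 / (x + 1) + 2 * x := by positivity
    rw [div_le_div_iff₀ (by norm_num) hden]
    have key : x * (2 * x ^ 2 / (x + 1) + 2 * x) = (2 * x ^ 3 + 2 * x ^ 2 * (x+1)) / (x+1) := by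
      field_simp
    rw [key, div_le_iff₀ hx1]
    nlinarith
end
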